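/- Let a > 0 and let z be a real random variable whose distribution is atomless and satisfies P(z ≤ −x) ≤ 1/(2 + a·x) for all x ≥ 0. Then for every c ≥ 0, E(|z + c| − |z|) ≥ c − (2/a)·log(1 + (a/2)·c). -/

import Mathlib

/-!
Pointwise, `|z + c| - |z| = c - 2 min((-z)⁺, c)`, and by the layer-cake formula the clamped
variable has expectation `∫₀^c P(-z > t) dt`. It remains to bound
`P(-z > t) ≤ P(z ≤ -t) ≤ 1 / (2 + a t)` and integrate over `[0, c]`.
-/

open MeasureTheory

theorem abs_add_sub_abs_eq_sub_two_mul_min (x : ℝ) {c : ℝ} (hc : 0 ≤ c) :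
    |x + c| - |x| = c - 2 * min (max (-x) 0) c := by
  rcases abs_cases x with ⟨h₁, h₂⟩ | ⟨h₁, h₂⟩ <;>
    rcases abs_cases (x + c) with ⟨h₃, h₄⟩ | ⟨h₃, h₄⟩ <;>
    simp only [min_def, max_def] <;> split_ifs <;> linarith

section Clamp

variable {Ω : Type*} [MeasurableSpace Ω] (μ : Measure Ω) [IsFiniteMeasure μ] {Y : Ω → ℝ} {c : ℝ}

theorem integrable_min_max_zero (hY : AEMeasurable Y μ) (hc : 0 ≤ c) :
    Integrable (fun ω => min (max (Y ω) 0) c) μ := by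
  refine .of_bound (hY.max aemeasurable_const |>.min aemeasurable_const).aestronglyMeasurable c
    (.of_forall fun ω => ?_)
  rw [Real.norm_of_nonneg (le_min (le_max_right _ _) hc)]
  exact min_le_right _ _

theorem integral_min_max_zero_eq_intervalIntegral_measureReal_lt (hY : AEMeasurable Y μ)
    (hc : 0 ≤ c) : ∫ ω, min (max (Y ω) 0) c ∂μ = ∫ t in 0..c, μ.real {ω | t < Y ω} := by
  have hlevel : Set.EqOn (fun t => μ.real {ω | t < min (max (Y ω) 0) c})
      ((Set.Iio c).indicator fun t => μ.real {ω | t < Y ω}) (Set.Ioi 0) := by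
    intro t (ht : 0 < t)
    by_cases htc : t < c
    · simp [htc, ht.not_gt]
    · simp [htc]
  rw [(integrable_min_max_zero μ hY hc).integral_eq_integral_meas_lt
      (.of_forall fun ω => le_min (le_max_right _ _) hc),
    setIntegral_congr_fun measurableSet_Ioi hlevel, setIntegral_indicator measurableSet_Iio,
    Set.Ioi_inter_Iio, ← integral_Ioc_eq_integral_Ioo, intervalIntegral.integral_of_le hc]

end Clamp

theorem integral_abs_add_sub_abs {Ω : Type*} [MeasurableSpace Ω] (μ : Measure Ω)
    [IsProbabilityMeasure μ] {z : Ω → ℝ} (hz : AEMeasurable z μ) {c : ℝ} (hc : 0 ≤ c) :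
    ∫ ω, (|z ω + c| - |z ω|) ∂μ = c - 2 * ∫ t in 0..c, μ.real {ω | t < -z ω} := by
  simp_rw [abs_add_sub_abs_eq_sub_two_mul_min _ hc]
  have hnz : AEMeasurable (fun ω => -z ω) μ := hz.neg
  rw [integral_sub (integrable_const c) ((integrable_min_max_zero μ hnz hc).const_mul 2),
    integral_const_mul, integral_min_max_zero_eq_intervalIntegral_measureReal_lt μ hnz hc]
  simp

theorem integral_one_div_two_add_mul {a c : ℝ} (ha : a ≠ 0) (hc : 0 < 2 + a * c) :
    ∫ t in 0..c, 1 / (2 + a * t) = (1 / a) * Real.log (1 + (a / 2) * c) := by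
  simp_rw [add_comm (2 : ℝ)]
  rw [intervalIntegral.integral_comp_mul_add (fun x => 1 / x) ha,
    integral_one_div_of_pos (by norm_num) (by linarith)]
  simp only [mul_zero, zero_add, smul_eq_mul]
  ring_nf

theorem expected_abs_dev_log_bound_general
    {Ω : Type*} [MeasurableSpace Ω] (μ : Measure Ω) [IsProbabilityMeasure μ]
    (a : ℝ) (ha : 0 < a)
    (z : Ω → ℝ) (hz : Measurable z)
    (htail : ∀ x : ℝ, 0 ≤ x → (μ {ω | z ω ≤ -x}).toReal ≤ 1 / (2 + a * x))
    (c : ℝ) (hc : 0 ≤ c) :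
    c - (2 / a) * Real.log (1 + (a / 2) * c) ≤ ∫ ω, (|z ω + c| - |z ω|) ∂μ := by
  have hbound : ∫ t in 0..c, μ.real {ω | t < -z ω} ≤ ∫ t in 0..c, 1 / (2 + a * t) := by
    refine intervalIntegral.integral_mono_on hc ?_ ?_ fun t ht => ?_
    · exact Antitone.intervalIntegrable fun s t hst =>
        measureReal_mono fun ω (h : t < -z ω) => hst.trans_lt h
    · refine ContinuousOn.intervalIntegrable_of_Icc hc ?_
      exact continuousOn_const.div (by fun_prop) fun t ht => by nlinarith [ht.1]
    · calc μ.real {ω | t < -z ω} ≤ μ.real {ω | z ω ≤ -t} :=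
            measureReal_mono fun ω (h : t < -z ω) => show z ω ≤ -t by linarith
        _ ≤ 1 / (2 + a * t) := htail t ht.1
  rw [integral_one_div_two_add_mul ha.ne' (by positivity)] at hbound
  rw [integral_abs_add_sub_abs μ hz.aemeasurable hc, div_eq_mul_one_div 2 a]
  linarith

/-- **Logarithmic lower bound for the expected absolute deviation.**
If `z` is atomless with `P(z ≤ -x) ≤ 1/(2 + a x)` for all `x ≥ 0`, then for every
`c ≥ 0`, `E(|z + c| - |z|) ≥ c - (2/a) log(1 + (a/2) c)`. -/
theorem expected_abs_dev_log_bound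
    {Ω : Type*} [MeasurableSpace Ω] (μ : Measure Ω) [IsProbabilityMeasure μ]
    (a : ℝ) (ha : 0 < a)
    (z : Ω → ℝ) (hz : Measurable z)
    (hatom : ∀ x : ℝ, μ {ω | z ω = x} = 0)
    (htail : ∀ x : ℝ, 0 ≤ x → (μ {ω | z ω ≤ -x}).toReal ≤ 1 / (2 + a * x))
    (c : ℝ) (hc : 0 ≤ c) :
    c - (2 / a) * Real.log (1 + (a / 2) * c) ≤ ∫ ω, (|z ω + c| - |z ω|) ∂μ :=
  expected_abs_dev_log_bound_general μ a ha z hz htail c hc
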